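/- arXiv:2302.04044 — 6 statements merged into one kernel-verified Lean document; each statement's English description precedes it below -/
import Mathlib

section
/- Let Ω be a convex subset (interval) of R and let F(Ω) = {n ∈ Z[τ] : n* ∈ Ω}. Then F(Ω) is closed under quasiaddition: if n, m ∈ F(Ω) then n ⊢ m ∈ F(Ω). -/
noncomputable def goldenτ : ℝ := (1 + Real.sqrt 5) / 2

/-- Quasiaddition n ⊢ m = τ²n − τm. -/
noncomputable def qadd (n m : ℝ) : ℝ := goldenτ ^ 2 * n - goldenτ * m

lemma goldenτ_sq : goldenτ ^ 2 = goldenτ + 1 := by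
  have h5 : Real.sqrt 5 ^ 2 = 5 := Real.sq_sqrt (by norm_num)
  unfold goldenτ; nlinarith [h5]

lemma goldenτ_gt_one : 1 < goldenτ := by
  have h5 : Real.sqrt 5 ^ 2 = 5 := Real.sq_sqrt (by norm_num)
  have h0 : 0 ≤ Real.sqrt 5 := Real.sqrt_nonneg 5
  unfold goldenτ; nlinarith

lemma goldenτ_lt_two : goldenτ < 2 := by
  have h5 : Real.sqrt 5 ^ 2 = 5 := Real.sq_sqrt (by norm_num)
  have h0 : 0 ≤ Real.sqrt 5 := Real.sqrt_nonneg 5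
  unfold goldenτ; nlinarith

/-- If Ω is convex, the Fibonacci-chain quasicrystal F(Ω) = {n ∈ Z[τ] : n* ∈ Ω}
is closed under quasiaddition: for n = a + bτ, m = c + dτ with n*, m* ∈ Ω,
n ⊢ m belongs to Z[τ] and its star image belongs to Ω. -/
theorem qadd_closed_F (Ω : Set ℝ) (hΩ : Convex ℝ Ω) (a b c d : ℤ)
    (hn : (a : ℝ) + b * (1 - goldenτ) ∈ Ω) (hm : (c : ℝ) + d * (1 - goldenτ) ∈ Ω) :
    ∃ e f : ℤ, qadd ((a : ℝ) + b * goldenτ) ((c : ℝ) + d * goldenτ) = e + f * goldenτ ∧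
      (e : ℝ) + f * (1 - goldenτ) ∈ Ω := by
  have h := goldenτ_sq
  have h1 := goldenτ_gt_one
  have h2 := goldenτ_lt_two
  refine ⟨a + b - d, a + 2*b - c - d, ?_, ?_⟩
  · unfold qadd
    push_cast
    linear_combination ((a:ℝ) - d + b * (goldenτ + 1)) * h
  · have key := hΩ hn hm (show (0:ℝ) ≤ 2 - goldenτ by linarith)
      (show (0:ℝ) ≤ goldenτ - 1 by linarith) (by ring)
    simp only [smul_eq_mul] at key
    have heq : ((↑(a + b - d) : ℝ)) + ↑(a + 2*b - c - d) * (1 - goldenτ)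
        = (2 - goldenτ) * ((a : ℝ) + b * (1 - goldenτ)) + (goldenτ - 1) * ((c : ℝ) + d * (1 - goldenτ)) := by
      push_cast
      linear_combination ((d:ℝ) - b) * h
    rw [heq]; exact key
end

section
/- More generally, for α ∈ R and β ∈ Z, the set {F_{α,β}(m) : m ∈ Z} equals F(Ω) = {n ∈ Z[τ] : n* ∈ (−1 + α + β, α + β]}. -/
/-- F_{α,β}(m) = ⌊m/τ + α⌋ + mτ + β. -/
noncomputable def Fab (α : ℝ) (β : ℤ) (m : ℤ) : ℝ :=
  (⌊(m : ℝ) / goldenτ + α⌋ : ℤ) + m * goldenτ + β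

lemma goldenτ_pos : (0:ℝ) < goldenτ := by
  unfold goldenτ
  have := Real.sqrt_nonneg 5
  linarith

lemma goldenτ_mul : goldenτ * (goldenτ - 1) = 1 := by
  unfold goldenτ
  have h5 : Real.sqrt 5 ^ 2 = 5 := Real.sq_sqrt (by norm_num)
  nlinarith

lemma div_goldenτ (m : ℤ) : (m : ℝ) / goldenτ = m * (goldenτ - 1) := by
  rw [div_eq_iff (ne_of_gt goldenτ_pos)]
  linear_combination (-(m:ℝ)) * goldenτ_mul

/-- For α ∈ ℝ, β ∈ ℤ, {F_{α,β}(m) : m ∈ Z} = {n ∈ Z[τ] : n* ∈ (−1+α+β, α+β]}. -/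
theorem Fab_eq_cutProject (α : ℝ) (β : ℤ) :
    {x : ℝ | ∃ m : ℤ, x = Fab α β m}
      = {x : ℝ | ∃ a b : ℤ, x = a + b * goldenτ ∧
          (a : ℝ) + b * (1 - goldenτ) ∈ Set.Ioc (-1 + α + β) (α + β)} := by
  ext x
  simp only [Set.mem_setOf_eq, Set.mem_Ioc]
  constructor
  · rintro ⟨m, rfl⟩
    refine ⟨⌊(m : ℝ) / goldenτ + α⌋ + β, m, ?_, ?_, ?_⟩
    · unfold Fab; push_cast; ring
    · have h := Int.sub_one_lt_floor ((m : ℝ) / goldenτ + α)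
      rw [div_goldenτ] at h ⊢
      push_cast
      linarith
    · have h := Int.floor_le ((m : ℝ) / goldenτ + α)
      rw [div_goldenτ] at h ⊢
      push_cast
      linarith
  · rintro ⟨a, b, rfl, h1, h2⟩
    refine ⟨b, ?_⟩
    unfold Fab
    have hfl : ⌊(b : ℝ) / goldenτ + α⌋ = a - β := by
      rw [Int.floor_eq_iff, div_goldenτ]
      constructor
      · push_cast; linarith
      · push_cast; linarith
    rw [hfl]
    push_cast
    ring
end

section
/- Let Ω = [a,b] ⊂ R with ab ≥ 0. For x, y, z ∈ Z[τ] with x*, y*, z* ∈ Ω, if x* + y* + z* ∈ Ω then x* + y* ∈ Ω. -/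
/-- Key lemma for the Jacobi identity: let Ω = [a,b] with ab ≥ 0, and let
x, y, z ∈ Z[τ] with star images x*, y*, z* ∈ Ω. If x* + y* + z* ∈ Ω then
x* + y* ∈ Ω. -/
theorem triple_sum_window (a b : ℝ) (hab : a * b ≥ 0)
    (p₁ q₁ p₂ q₂ p₃ q₃ : ℤ)
    (hx : (p₁ : ℝ) + q₁ * (1 - goldenτ) ∈ Set.Icc a b)
    (hy : (p₂ : ℝ) + q₂ * (1 - goldenτ) ∈ Set.Icc a b)
    (hz : (p₃ : ℝ) + q₃ * (1 - goldenτ) ∈ Set.Icc a b)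
    (hsum : ((p₁ : ℝ) + q₁ * (1 - goldenτ)) + ((p₂ : ℝ) + q₂ * (1 - goldenτ))
        + ((p₃ : ℝ) + q₃ * (1 - goldenτ)) ∈ Set.Icc a b) :
    ((p₁ : ℝ) + q₁ * (1 - goldenτ)) + ((p₂ : ℝ) + q₂ * (1 - goldenτ)) ∈ Set.Icc a b := by
  obtain ⟨hx1, hx2⟩ := hx
  obtain ⟨hy1, hy2⟩ := hy
  obtain ⟨hz1, hz2⟩ := hz
  obtain ⟨hs1, hs2⟩ := hsum
  rcases le_or_gt 0 a with ha | ha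
  · exact ⟨by linarith, by linarith⟩
  · have hb : b ≤ 0 := by nlinarith
    exact ⟨by linarith, by linarith⟩
end

section
/- Let Ω = [a,b] with ab ≥ 0 and let F(Ω) = {x ∈ Z[τ] : x* ∈ Ω}. Define on the free R-vector space with basis {L_x}_{x ∈ F(Ω)} the bracket [L_x, L_y] = (y − x)·χ_Ω(x* + y*)·L_{x+y}, where χ_Ω is the characteristic function of Ω and L_{x+y} is interpreted as 0 if x + y ∉ F(Ω). Then this bracket is antisymmetric and satisfies the Jacobi identity, making the span a Lie algebra. -/
/-- An element a + bτ of Z[τ], encoded by its coefficient pair. -/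
noncomputable def valp (p : ℤ × ℤ) : ℝ := p.1 + p.2 * goldenτ

/-- The star image (a + bτ)* = a + b(1−τ). -/
noncomputable def stp (p : ℤ × ℤ) : ℝ := p.1 + p.2 * (1 - goldenτ)

open Classical in
/-- Characteristic function of a set Ω ⊆ ℝ. -/
noncomputable def χ (Ω : Set ℝ) (t : ℝ) : ℝ := if t ∈ Ω then 1 else 0

/-- The quasicrystal bracket [L_x, L_y] = (y − x)·χ_Ω(x* + y*)·L_{x+y} on the free
real vector space with basis indexed by Z[τ] (coefficient pairs). Note that
x + y ∈ F(Ω) iff χ_Ω(x* + y*) = 1, so L_{x+y} appearing with nonzero coefficient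
automatically lies in F(Ω). -/
noncomputable def br (Ω : Set ℝ) (x y : ℤ × ℤ) : (ℤ × ℤ) →₀ ℝ :=
  ((valp y - valp x) * χ Ω (stp x + stp y)) • Finsupp.single (x + y) (1 : ℝ)

/-- Structure coefficient of the bracket. -/
noncomputable def cf (Ω : Set ℝ) (x y : ℤ × ℤ) : ℝ :=
  (valp y - valp x) * χ Ω (stp x + stp y)

lemma valp_add (p q : ℤ × ℤ) : valp (p + q) = valp p + valp q := by
  simp [valp, Prod.fst_add, Prod.snd_add]; ring

lemma stp_add (p q : ℤ × ℤ) : stp (p + q) = stp p + stp q := by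
  simp [stp, Prod.fst_add, Prod.snd_add]; ring

lemma pair_mem (a b u v w : ℝ) (hab : a * b ≥ 0)
    (hu : u ∈ Set.Icc a b) (hv : v ∈ Set.Icc a b) (hw : w ∈ Set.Icc a b)
    (hs : u + v + w ∈ Set.Icc a b) : v + w ∈ Set.Icc a b := by
  obtain ⟨hu1, hu2⟩ := hu
  obtain ⟨hv1, hv2⟩ := hv
  obtain ⟨hw1, hw2⟩ := hw
  obtain ⟨hs1, hs2⟩ := hs
  rcases le_or_gt 0 a with ha | ha
  · exact ⟨by linarith, by linarith⟩
  · have hb : b ≤ 0 := by nlinarith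
    exact ⟨by linarith, by linarith⟩

/-- For Ω = [a,b] with ab ≥ 0, the bracket on generators indexed by
F(Ω) = {x ∈ Z[τ] : x* ∈ Ω} is antisymmetric and satisfies the Jacobi identity
(stated on basis elements, using bilinearity: [L_x,[L_y,L_z]] = c(y,z) • [L_x, L_{y+z}]),
hence defines a Lie algebra. -/
theorem quasicrystal_lie_algebra (a b : ℝ) (hab : a * b ≥ 0) :
    (∀ x y : ℤ × ℤ, stp x ∈ Set.Icc a b → stp y ∈ Set.Icc a b →
      br (Set.Icc a b) x y = - br (Set.Icc a b) y x) ∧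
    (∀ x y z : ℤ × ℤ, stp x ∈ Set.Icc a b → stp y ∈ Set.Icc a b → stp z ∈ Set.Icc a b →
      cf (Set.Icc a b) y z • br (Set.Icc a b) x (y + z) +
      cf (Set.Icc a b) z x • br (Set.Icc a b) y (z + x) +
      cf (Set.Icc a b) x y • br (Set.Icc a b) z (x + y) = 0) := by
  constructor
  · intro x y hx hy
    unfold br
    rw [add_comm x y, add_comm (stp x) (stp y), ← neg_smul]
    congr 1
    ring
  · intro x y z hx hy hz
    unfold br cf
    have h1 : y + (z + x) = x + (y + z) := by ring
    have h2 : z + (x + y) = x + (y + z) := by ring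
    rw [h1, h2, smul_smul, smul_smul, smul_smul, ← add_smul, ← add_smul]
    rw [stp_add y z, stp_add z x, stp_add x y, valp_add y z, valp_add z x, valp_add x y]
    have e1 : stp y + (stp z + stp x) = stp x + (stp y + stp z) := by ring
    have e2 : stp z + (stp x + stp y) = stp x + (stp y + stp z) := by ring
    rw [e1, e2]
    by_cases hS : stp x + (stp y + stp z) ∈ Set.Icc a b
    · have hyz : stp y + stp z ∈ Set.Icc a b :=
        pair_mem a b (stp x) (stp y) (stp z) hab hx hy hz (by rw [← add_assoc] at hS; exact hS)
      have hzx : stp z + stp x ∈ Set.Icc a b := by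
        apply pair_mem a b (stp y) (stp z) (stp x) hab hy hz hx
        have : stp y + stp z + stp x = stp x + (stp y + stp z) := by ring
        rw [this]; exact hS
      have hxy : stp x + stp y ∈ Set.Icc a b := by
        apply pair_mem a b (stp z) (stp x) (stp y) hab hz hx hy
        have : stp z + stp x + stp y = stp x + (stp y + stp z) := by ring
        rw [this]; exact hS
      have hz0 : ((valp z - valp y) * χ (Set.Icc a b) (stp y + stp z) *
          ((valp y + valp z - valp x) * χ (Set.Icc a b) (stp x + (stp y + stp z))) +
          (valp x - valp z) * χ (Set.Icc a b) (stp z + stp x) *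
          ((valp z + valp x - valp y) * χ (Set.Icc a b) (stp x + (stp y + stp z))) +
          (valp y - valp x) * χ (Set.Icc a b) (stp x + stp y) *
          ((valp x + valp y - valp z) * χ (Set.Icc a b) (stp x + (stp y + stp z)))) = 0 := by
        simp only [χ, if_pos hS, if_pos hyz, if_pos hzx, if_pos hxy]
        ring
      rw [hz0, zero_smul]
    · have hχ : χ (Set.Icc a b) (stp x + (stp y + stp z)) = 0 := by simp [χ, hS]
      rw [hχ]
      ring_nf
      simp
end

section
/- In the quasicrystal Lie algebra L(F(Ω)) with Ω = [a,1], if a ≥ 1/2 then the Lie algebra is abelian: [L_x, L_y] = 0 for all x, y ∈ F(Ω). -/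
lemma irrational_goldenτ : Irrational goldenτ := by
  have h5 : Irrational (Real.sqrt 5) := by
    have : Nat.Prime 5 := by norm_num
    exact_mod_cast this.irrational_sqrt
  have := Irrational.ratCast_mul (Irrational.ratCast_add (q := 1) h5) (q := 1/2) (by norm_num)
  simpa [goldenτ, div_eq_mul_inv, mul_comm] using this

lemma stp_ne_half (p : ℤ × ℤ) : stp p ≠ 1 / 2 := by
  intro h
  unfold stp at h
  rcases eq_or_ne p.2 0 with h2 | h2
  · rw [h2] at h
    push_cast at h
    have : (2 : ℝ) * (p.1 : ℝ) = 1 := by linarith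
    have : (2 * p.1 : ℤ) = (1 : ℤ) := by exact_mod_cast this
    omega
  · have : Irrational ((p.1 : ℝ) + p.2 * (1 - goldenτ)) := by
      have hg : Irrational ((p.2 : ℝ) * goldenτ) := by
        have := Irrational.intCast_mul irrational_goldenτ h2
        simpa [mul_comm] using this
      have h1 : Irrational ((p.2 : ℝ) * (1 - goldenτ)) := by
        have := Irrational.intCast_sub hg p.2
        simpa [mul_sub, mul_one] using Irrational.neg this
      simpa using Irrational.intCast_add h1 p.1
    rw [h] at this
    exact this ⟨1/2, by norm_num⟩

/-- For Ω = [a,1] with a ≥ 1/2, the quasicrystal Lie algebra L(F(Ω)) is abelian: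
[L_x, L_y] = 0 for all x, y ∈ F(Ω). -/
theorem quasicrystal_abelian (a : ℝ) (ha : a ≥ 1 / 2) :
    ∀ x y : ℤ × ℤ, stp x ∈ Set.Icc a 1 → stp y ∈ Set.Icc a 1 →
      br (Set.Icc a 1) x y = 0 := by
  intro x y hx hy
  have hnot : stp x + stp y ∉ Set.Icc a 1 := by
    intro ⟨_, h1⟩
    have hxh : stp x = 1 / 2 := by
      cases hx; cases hy; linarith
    exact stp_ne_half x hxh
  simp [br, χ, hnot]
end

section
/- Let Ω = [0,1] and Ξ = [c,1] with 0 < c ≤ 1. Then the span of {L_x : x ∈ F(Ξ)} is a Lie ideal of the quasicrystal Lie algebra L(F(Ω)): for x ∈ F(Ω) and y ∈ F(Ξ), the bracket [L_x, L_y] lies in the span of {L_z : z ∈ F(Ξ)} ∪ {0}. -/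
lemma stp_add_s15 (x y : ℤ × ℤ) : stp (x + y) = stp x + stp y := by
  simp [stp, Prod.fst_add, Prod.snd_add]; push_cast; ring

/-- For Ω = [0,1] and Ξ = [c,1] with 0 < c ≤ 1, the span of {L_z : z ∈ F(Ξ)} is a
Lie ideal of L(F(Ω)): for x ∈ F(Ω), y ∈ F(Ξ), the bracket [L_x, L_y] lies in the
span of {L_z : z ∈ F(Ξ)}. -/
theorem quasicrystal_ideal (c : ℝ) (hc : 0 < c) (hc1 : c ≤ 1) :
    ∀ x y : ℤ × ℤ, stp x ∈ Set.Icc (0 : ℝ) 1 → stp y ∈ Set.Icc c 1 →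
      br (Set.Icc (0 : ℝ) 1) x y ∈
        Submodule.span ℝ {f : (ℤ × ℤ) →₀ ℝ |
          ∃ z : ℤ × ℤ, stp z ∈ Set.Icc c 1 ∧ f = Finsupp.single z 1} := by
  intro x y hx hy
  unfold br χ
  by_cases h : stp x + stp y ∈ Set.Icc (0 : ℝ) 1
  · apply Submodule.smul_mem
    apply Submodule.subset_span
    exact ⟨x + y, ⟨by rw [stp_add_s15]; linarith [hx.1, hy.1, h.2], by rw [stp_add_s15]; exact h.2⟩, rfl⟩
  · simp [h]
end
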